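/- Let f(y,y') = Σ_{i=0}^n a_i(y)(y')^i ∈ k(t)[y,y'] with ℓ = max_i {deg(a_i) − 2(n−i)} > 0, and let c ∈ k with a₀(c) ≠ 0. Define b_i(z) = (−1)^i a_i((cz+1)/z) z^{ℓ+2n−2i} and g(z,z') = Σ_{i=0}^n b_i(z)(z')^i. Then g(z,z') = z^{2n+ℓ} · f((cz+1)/z, −z'/z²), deg(g,z') = n, deg(g,z) = 2n+ℓ, and tdeg(g) = 2n+ℓ. -/
import Mathlib


open Polynomial

lemma coeff_lin_pow {F : Type*} [Field F] (r : F) (j : ℕ) :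
    ((C r * X + 1 : F[X]) ^ j).coeff j = r ^ j := by
  rcases eq_or_ne r 0 with h | h
  · subst h
    simp [coeff_one, zero_pow_eq, eq_comm]
  · have h1 : (C r * X + 1 : F[X]).natDegree = 1 := by
      rw [show (1:F[X]) = C 1 from (map_one C).symm]; exact natDegree_linear h
    have h2 : ((C r * X + 1 : F[X]) ^ j).natDegree = j := by
      rw [natDegree_pow, h1, mul_one]
    have h3 := coeff_natDegree (p := (C r * X + 1 : F[X]) ^ j)
    rw [h2] at h3
    rw [h3, leadingCoeff_pow]
    congr 1
    rw [leadingCoeff, h1]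
    simp [coeff_one]

lemma key_identity {F : Type*} [Field F] (A u z w : F) (hz : z ≠ 0) (i j e : ℕ) :
    (-1) ^ i * (A * u ^ j * z ^ e) * w ^ i =
      z ^ e * z ^ (2 * i + j) * (A * (u / z) ^ j * (-w / z ^ 2) ^ i) := by
  rw [div_pow, div_pow, neg_pow, pow_add, ← pow_mul]
  field_simp
  ring

/-- `bpoly n ℓ c a i` is the polynomial `b_i(z) = (-1)^i a_i((cz+1)/z) z^{ℓ+2n-2i}`,
expanded as `(-1)^i ∑_j coeff_j(a_i) (cz+1)^j z^{ℓ+2n-2i-j}`. -/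
noncomputable def bpoly {k : Type*} [Field k] (n ℓ : ℕ) (c : k)
    (a : Fin (n + 1) → Polynomial (RatFunc k)) (i : Fin (n + 1)) : Polynomial (RatFunc k) :=
  Polynomial.C ((-1 : RatFunc k) ^ (i : ℕ)) *
    ∑ j ∈ Finset.range ((a i).natDegree + 1),
      Polynomial.C ((a i).coeff j) *
        (Polynomial.C (RatFunc.C c) * Polynomial.X + 1) ^ j *
        Polynomial.X ^ (ℓ + 2 * n - 2 * (i : ℕ) - j)

-- natDegree bound
lemma bpoly_natDegree_le {k : Type*} [Field k] (n ℓ : ℕ) (c : k)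
    (a : Fin (n + 1) → Polynomial (RatFunc k)) (i : Fin (n + 1))
    (h : (a i).natDegree ≤ ℓ + 2 * n - 2 * (i : ℕ)) :
    (bpoly n ℓ c a i).natDegree ≤ ℓ + 2 * n - 2 * (i : ℕ) := by
  unfold bpoly
  refine (natDegree_mul_le).trans ?_
  rw [natDegree_C, zero_add]
  refine natDegree_sum_le_of_forall_le _ _ fun j hj => ?_
  have hj' : j ≤ (a i).natDegree := Nat.lt_succ_iff.mp (Finset.mem_range.mp hj)
  refine natDegree_mul_le.trans ?_
  have h1 : ((C (RatFunc.C c) * X + 1 : (RatFunc k)[X]) ^ j).natDegree ≤ j := by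
    refine (natDegree_pow_le).trans ?_
    have : (C (RatFunc.C c) * X + 1 : (RatFunc k)[X]).natDegree ≤ 1 := by
      refine (natDegree_add_le _ _).trans ?_
      simp [natDegree_mul_le.trans]
    nlinarith
  have h2 := natDegree_mul_le (p := (C ((a i).coeff j) : (RatFunc k)[X]))
    (q := (C (RatFunc.C c) * X + 1 : (RatFunc k)[X]) ^ j)
  rw [natDegree_C, zero_add] at h2
  have h3 := natDegree_X_pow (R := RatFunc k) (ℓ + 2 * n - 2 * (i : ℕ) - j)
  omega

-- coefficient at top degree
lemma bpoly_coeff_top {k : Type*} [Field k] (n ℓ : ℕ) (c : k)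
    (a : Fin (n + 1) → Polynomial (RatFunc k)) (i : Fin (n + 1))
    (h : (a i).natDegree ≤ ℓ + 2 * n - 2 * (i : ℕ)) :
    (bpoly n ℓ c a i).coeff (ℓ + 2 * n - 2 * (i : ℕ)) =
      (-1 : RatFunc k) ^ (i : ℕ) * (a i).eval (RatFunc.C c) := by
  set e := ℓ + 2 * n - 2 * (i : ℕ) with he
  unfold bpoly
  rw [coeff_C_mul, finset_sum_coeff]
  congr 1
  rw [eval_eq_sum_range]
  refine Finset.sum_congr rfl fun j hj => ?_
  have hj' : j ≤ (a i).natDegree := Nat.lt_succ_iff.mp (Finset.mem_range.mp hj)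
  have hje : j ≤ e := hj'.trans h
  rw [coeff_mul_X_pow', if_pos (by omega : e - j ≤ e)]
  have : e - (e - j) = j := by omega
  rw [this, coeff_C_mul, coeff_lin_pow]

-- coefficient detecting nonvanishing: at e - natDegree
lemma bpoly_coeff_low {k : Type*} [Field k] (n ℓ : ℕ) (c : k)
    (a : Fin (n + 1) → Polynomial (RatFunc k)) (i : Fin (n + 1))
    (h : (a i).natDegree ≤ ℓ + 2 * n - 2 * (i : ℕ)) :
    (bpoly n ℓ c a i).coeff (ℓ + 2 * n - 2 * (i : ℕ) - (a i).natDegree) =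
      (-1 : RatFunc k) ^ (i : ℕ) * (a i).leadingCoeff := by
  set e := ℓ + 2 * n - 2 * (i : ℕ) with he
  set D := (a i).natDegree with hD
  unfold bpoly
  rw [coeff_C_mul, finset_sum_coeff]
  congr 1
  rw [Finset.sum_eq_single_of_mem D (Finset.self_mem_range_succ D)]
  · rw [coeff_mul_X_pow', if_pos (le_refl _), Nat.sub_self, coeff_C_mul]
    have h0 : (((C (RatFunc.C c) * X + 1 : (RatFunc k)[X]) ^ D)).coeff 0 = 1 := by
      rw [coeff_zero_eq_eval_zero]
      simp
    rw [h0, mul_one]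
    rfl
  · intro j hj hjD
    have hj' : j ≤ D := Nat.lt_succ_iff.mp (Finset.mem_range.mp hj)
    have hjD' : j < D := lt_of_le_of_ne hj' hjD
    rw [coeff_mul_X_pow', if_neg (by omega)]


/-- The ring homomorphism `k(t) → k(t)(z)(z')`. -/
noncomputable def phi (k : Type*) [Field k] : RatFunc k →+* RatFunc (RatFunc (RatFunc k)) :=
  (RatFunc.C : RatFunc (RatFunc k) →+* RatFunc (RatFunc (RatFunc k))).comp
    (RatFunc.C : RatFunc k →+* RatFunc (RatFunc k))

theorem stmt_11 {k : Type*} [Field k] [IsAlgClosed k] [CharZero k]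
    (n ℓ : ℕ) (c : k) (a : Fin (n + 1) → Polynomial (RatFunc k))
    (han : a (Fin.last n) ≠ 0) (hl : 0 < ℓ)
    (hldef : (ℓ : ℤ) = Finset.univ.sup' Finset.univ_nonempty
        (fun i : Fin (n + 1) => ((a i).natDegree : ℤ) - 2 * ((n : ℤ) - (i : ℕ))))
    (hc : (a 0).eval (RatFunc.C c) ≠ 0) :
    -- the variables z and z' of k(t)(z)(z')
    ∀ z z' : RatFunc (RatFunc (RatFunc k)),
      z = RatFunc.C (RatFunc.X : RatFunc (RatFunc k)) →
      z' = (RatFunc.X : RatFunc (RatFunc (RatFunc k))) →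
      -- 1) g(z,z') = z^{2n+ℓ} f((cz+1)/z, -z'/z²)
      (Polynomial.eval₂ (Polynomial.eval₂RingHom (phi k) z) z'
          (∑ i : Fin (n + 1), Polynomial.C (bpoly n ℓ c a i) * Polynomial.X ^ (i : ℕ)) =
        z ^ (2 * n + ℓ) *
          ∑ i : Fin (n + 1),
            Polynomial.eval₂ (phi k) ((phi k (RatFunc.C c) * z + 1) / z) (a i) *
              (-z' / z ^ 2) ^ (i : ℕ)) ∧
      -- 2) deg(g, z') = n
      (∑ i : Fin (n + 1), Polynomial.C (bpoly n ℓ c a i) * Polynomial.X ^ (i : ℕ)).natDegree = n ∧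
      -- 3) deg(g, z) = 2n + ℓ
      (Finset.univ.sup' Finset.univ_nonempty
          (fun i : Fin (n + 1) => (bpoly n ℓ c a i).natDegree)) = 2 * n + ℓ ∧
      -- 4) tdeg(g) = 2n + ℓ
      (Finset.univ.sup' Finset.univ_nonempty
          (fun i : Fin (n + 1) => (bpoly n ℓ c a i).natDegree + (i : ℕ))) = 2 * n + ℓ := by
  intro z z' hzdef hz'def
  have hz : z ≠ 0 := by rw [hzdef]; simp [RatFunc.X_ne_zero]
  have hstar : ∀ i : Fin (n + 1), (a i).natDegree + 2 * (i : ℕ) ≤ ℓ + 2 * n := by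
    intro i
    have h1 : ((a i).natDegree : ℤ) - 2 * ((n : ℤ) - (i : ℕ)) ≤ (ℓ : ℤ) := by
      rw [hldef]; exact Finset.le_sup' (fun i : Fin (n + 1) => ((a i).natDegree : ℤ) - 2 * ((n : ℤ) - (i : ℕ))) (Finset.mem_univ i)
    have h2 : (i : ℕ) ≤ n := Nat.lt_succ_iff.mp i.isLt
    omega
  have hDle : ∀ i : Fin (n + 1), (a i).natDegree ≤ ℓ + 2 * n - 2 * (i : ℕ) := by
    intro i
    have h1 := hstar i
    have h2 : (i : ℕ) ≤ n := Nat.lt_succ_iff.mp i.isLt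
    omega
  -- b_n ≠ 0
  have hbn : bpoly n ℓ c a (Fin.last n) ≠ 0 := by
    intro h0
    have hlow := bpoly_coeff_low n ℓ c a (Fin.last n) (hDle _)
    rw [h0, coeff_zero] at hlow
    rcases mul_eq_zero.mp hlow.symm with h | h
    · exact pow_ne_zero _ (neg_ne_zero.mpr one_ne_zero) h
    · exact han (leadingCoeff_eq_zero.mp h)
  -- claim 2
  have hcoeffG : (∑ i : Fin (n + 1), C (bpoly n ℓ c a i) * X ^ (i : ℕ)).coeff n
      = bpoly n ℓ c a (Fin.last n) := by
    rw [finset_sum_coeff]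
    rw [Finset.sum_eq_single_of_mem (Fin.last n) (Finset.mem_univ _)]
    · simp [coeff_C_mul, coeff_X_pow]
    · intro i _ hne
      rw [coeff_C_mul, coeff_X_pow, if_neg, mul_zero]
      intro h
      exact hne (Fin.ext (by simpa using h.symm))
  have claim2 : (∑ i : Fin (n + 1), C (bpoly n ℓ c a i) * X ^ (i : ℕ)).natDegree = n := by
    apply le_antisymm
    · refine natDegree_sum_le_of_forall_le _ _ fun i _ => ?_
      refine natDegree_mul_le.trans ?_
      have : (i : ℕ) ≤ n := Nat.lt_succ_iff.mp i.isLt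
      simpa using this
    · exact le_natDegree_of_ne_zero (hcoeffG ▸ hbn)
  -- degree of b_0
  have hb0deg : (bpoly n ℓ c a 0).natDegree = ℓ + 2 * n := by
    apply le_antisymm
    · simpa using bpoly_natDegree_le n ℓ c a 0 (hDle 0)
    · apply le_natDegree_of_ne_zero
      have htop := bpoly_coeff_top n ℓ c a 0 (hDle 0)
      simp only [Fin.val_zero, mul_zero, Nat.sub_zero, pow_zero, one_mul] at htop ⊢
      rw [htop]
      exact hc
  have claim3 : (Finset.univ.sup' Finset.univ_nonempty
      (fun i : Fin (n + 1) => (bpoly n ℓ c a i).natDegree)) = 2 * n + ℓ := by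
    apply le_antisymm
    · refine Finset.sup'_le _ _ fun i _ => ?_
      have h1 := bpoly_natDegree_le n ℓ c a i (hDle i)
      have h2 : (i : ℕ) ≤ n := Nat.lt_succ_iff.mp i.isLt
      omega
    · have h := Finset.le_sup' (fun i : Fin (n + 1) => (bpoly n ℓ c a i).natDegree)
        (Finset.mem_univ (0 : Fin (n + 1)))
      rw [hb0deg] at h
      omega
  have claim4 : (Finset.univ.sup' Finset.univ_nonempty
      (fun i : Fin (n + 1) => (bpoly n ℓ c a i).natDegree + (i : ℕ))) = 2 * n + ℓ := by
    apply le_antisymm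
    · refine Finset.sup'_le _ _ fun i _ => ?_
      have h1 := bpoly_natDegree_le n ℓ c a i (hDle i)
      have h2 : (i : ℕ) ≤ n := Nat.lt_succ_iff.mp i.isLt
      omega
    · have h := Finset.le_sup' (fun i : Fin (n + 1) => (bpoly n ℓ c a i).natDegree + (i : ℕ))
        (Finset.mem_univ (0 : Fin (n + 1)))
      simp only [Fin.val_zero, add_zero, hb0deg] at h
      omega
  refine ⟨?_, claim2, claim3, claim4⟩
  -- claim 1
  rw [eval₂_finset_sum]
  simp only [eval₂_mul, eval₂_C, eval₂_X_pow, coe_eval₂RingHom]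
  rw [Finset.mul_sum]
  refine Finset.sum_congr rfl fun i _ => ?_
  rcases eq_or_ne (a i) 0 with ha | ha
  · unfold bpoly
    simp [ha]
  · have hD : (a i).natDegree ≤ ℓ + 2 * n - 2 * (i : ℕ) := hDle i
    conv_rhs => rw [eval₂_eq_sum_range]
    unfold bpoly
    simp only [eval₂_mul, eval₂_C, eval₂_finset_sum, eval₂_pow, eval₂_add, eval₂_one,
      eval₂_X_pow, eval₂_X]
    rw [Finset.mul_sum, Finset.sum_mul, Finset.sum_mul, Finset.mul_sum]
    refine Finset.sum_congr rfl fun j hj => ?_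
    have hj' : j ≤ (a i).natDegree := Nat.lt_succ_iff.mp (Finset.mem_range.mp hj)
    have hje : j ≤ ℓ + 2 * n - 2 * (i : ℕ) := hj'.trans hD
    have hin : (i : ℕ) ≤ n := Nat.lt_succ_iff.mp i.isLt
    have hm : (ℓ + 2 * n - 2 * (i : ℕ) - j) + (2 * (i : ℕ) + j) = 2 * n + ℓ := by omega
    have hphi : phi k ((-1 : RatFunc k) ^ (i : ℕ)) = (-1) ^ (i : ℕ) := by
      simp [map_pow, map_neg, map_one]
    rw [hphi, ← hm, pow_add]
    exact key_identity ((phi k) ((a i).coeff j)) ((phi k) (RatFunc.C c) * z + 1) z z' hz (i : ℕ) j (ℓ + 2 * n - 2 * (i : ℕ) - j)
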